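/- Continuity equation for the Gaussian entropic interpolation of the heat semigroup: fix ε > 0, x0, x1 ∈ ℝⁿ, set x_t = (1−t)x0 + t x1, D^ε_t = α^ε t(1−t) + 1 with α^ε = δ²/(1+δ) and δ = (ε − 2 + √(4 + ε²))/2, and let μ^ε_t(x) = (2π D^ε_t)^{−n/2} exp(−|x − x_t|²/(2 D^ε_t)) be the density of N(x_t, D^ε_t·Id). Then on (0,1)×ℝⁿ the flow (μ^ε_t) satisfies the continuity equation ∂_t μ^ε_t + ∇·( μ^ε_t v^{cu,ε}_t ) = 0, where the current velocity is v^{cu,ε}_t(x) = ( (d/dt D^ε_t) / (2 D^ε_t) ) (x − x_t) + (x1 − x0). Moreover μ^ε_t = (x̂^ε_t)_# μ^ε_0 with x̂^ε_t(x) = √(D^ε_t)(x − x0) + x_t, and t ↦ x̂^ε_t(x) solves the ODE d/dt x̂^ε_t = v^{cu,ε}_t(x̂^ε_t) for every x ∈ ℝⁿ. -/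

import Mathlib

open MeasureTheory Real Filter Set
open scoped ENNReal Topology

noncomputable section

/-- `δ = (ε − 2 + √(4 + ε²))/2`. -/
def deltaH (eps : ℝ) : ℝ := (eps - 2 + Real.sqrt (4 + eps ^ 2)) / 2

/-- `α^ε = δ²/(1+δ)`. -/
def alphaH (eps : ℝ) : ℝ := deltaH eps ^ 2 / (1 + deltaH eps)

/-- The variance `D^ε_t = α^ε t(1−t) + 1` of the entropic interpolation. -/
def DH (eps t : ℝ) : ℝ := alphaH eps * (t * (1 - t)) + 1

/-- The mean `x_t = (1−t)x0 + t·x1`. -/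
def xMean (n : ℕ) (x0 x1 : EuclideanSpace ℝ (Fin n)) (t : ℝ) : EuclideanSpace ℝ (Fin n) :=
  (1 - t) • x0 + t • x1

/-- The density of the Gaussian entropic interpolation `N(x_t, D^ε_t·Id)`. -/
def muH (n : ℕ) (eps : ℝ) (x0 x1 : EuclideanSpace ℝ (Fin n)) (t : ℝ)
    (x : EuclideanSpace ℝ (Fin n)) : ℝ :=
  (2 * π * DH eps t) ^ (-(n : ℝ) / 2) *
    Real.exp (-‖x - xMean n x0 x1 t‖ ^ 2 / (2 * DH eps t))

/-- The current velocity `v^{cu,ε}_t(x) = (Ḋ^ε_t/(2D^ε_t))(x − x_t) + (x1 − x0)`. -/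
def vcu (n : ℕ) (eps : ℝ) (x0 x1 : EuclideanSpace ℝ (Fin n)) (t : ℝ)
    (x : EuclideanSpace ℝ (Fin n)) : EuclideanSpace ℝ (Fin n) :=
  (deriv (DH eps) t / (2 * DH eps t)) • (x - xMean n x0 x1 t) + (x1 - x0)

/-- The flow map `x̂^ε_t(x) = √(D^ε_t)(x − x0) + x_t`. -/
def xhat (n : ℕ) (eps : ℝ) (x0 x1 : EuclideanSpace ℝ (Fin n)) (t : ℝ)
    (x : EuclideanSpace ℝ (Fin n)) : EuclideanSpace ℝ (Fin n) :=
  Real.sqrt (DH eps t) • (x - x0) + xMean n x0 x1 t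

/-! ### Auxiliary lemmas -/

lemma deltaH_nonneg {eps : ℝ} (heps : 0 < eps) : 0 ≤ deltaH eps := by
  have h1 : (2 - eps) ≤ Real.sqrt (4 + eps ^ 2) := by
    have : 2 - eps ≤ |2 - eps| := le_abs_self _
    refine this.trans ?_
    rw [← Real.sqrt_sq_eq_abs]
    apply Real.sqrt_le_sqrt
    nlinarith [sq_nonneg eps]
  unfold deltaH; linarith

lemma alphaH_nonneg {eps : ℝ} (heps : 0 < eps) : 0 ≤ alphaH eps := by
  have h := deltaH_nonneg heps
  exact div_nonneg (sq_nonneg _) (by linarith)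

lemma hasDerivAt_DH (eps t : ℝ) :
    HasDerivAt (DH eps) (alphaH eps * (1 - 2 * t)) t := by
  have h : HasDerivAt (fun t : ℝ => alphaH eps * (t * (1 - t)) + 1)
      (alphaH eps * (1 - 2 * t)) t := by
    have h1 : HasDerivAt (fun t : ℝ => t * (1 - t)) (1 - 2 * t) t := by
      have := (hasDerivAt_id t).mul ((hasDerivAt_id t).const_sub 1)
      refine this.congr_deriv (Eq.symm ?_); simp only [id]; ring
    exact (h1.const_mul (alphaH eps)).add_const 1
  exact h

lemma DH_pos {eps : ℝ} (heps : 0 < eps) {t : ℝ} (ht : t ∈ Set.Icc (0:ℝ) 1) :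
    0 < DH eps t := by
  have h := alphaH_nonneg heps
  have : 0 ≤ t * (1 - t) := mul_nonneg ht.1 (by linarith [ht.2])
  unfold DH; nlinarith

lemma map_withDensity_equiv {α β : Type*} [MeasurableSpace α] [MeasurableSpace β]
    (e : α ≃ᵐ β) (μ : Measure α) {g : α → ℝ≥0∞} (hg : Measurable g) :
    Measure.map e (μ.withDensity g) = (Measure.map e μ).withDensity (fun y => g (e.symm y)) := by
  ext s hs
  rw [Measure.map_apply e.measurable hs, withDensity_apply _ (e.measurable hs),
    withDensity_apply _ hs]
  have h2 := setLIntegral_map (μ := μ) (g := ⇑e) (f := fun y => g (e.symm y)) hs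
    (hg.comp e.symm.measurable) e.measurable
  rw [h2]
  simp

lemma continuous_muH (n : ℕ) (eps : ℝ) (x0 x1 : EuclideanSpace ℝ (Fin n)) (t : ℝ) :
    Continuous (fun x => muH n eps x0 x1 t x) := by
  unfold muH
  fun_prop

lemma xMean_zero (n : ℕ) (x0 x1 : EuclideanSpace ℝ (Fin n)) : xMean n x0 x1 0 = x0 := by
  simp [xMean]

lemma DH_zero (eps : ℝ) : DH eps 0 = 1 := by simp [DH]

lemma hasDerivAt_xMean (n : ℕ) (x0 x1 : EuclideanSpace ℝ (Fin n)) (t : ℝ) :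
    HasDerivAt (fun s => xMean n x0 x1 s) (x1 - x0) t := by
  have h := (((hasDerivAt_id t).const_sub 1).smul_const x0).add
    ((hasDerivAt_id t).smul_const x1)
  refine h.congr_deriv (Eq.symm ?_)
  module

/-! ### The ODE for the flow map -/

lemma xhat_ode (n : ℕ) (eps : ℝ) (heps : 0 < eps) (x0 x1 x : EuclideanSpace ℝ (Fin n))
    {t : ℝ} (ht : t ∈ Set.Icc (0:ℝ) 1) :
    HasDerivAt (fun s => xhat n eps x0 x1 s x)
      (vcu n eps x0 x1 t (xhat n eps x0 x1 t x)) t := by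
  have hD := DH_pos heps ht
  have hsp : 0 < Real.sqrt (DH eps t) := Real.sqrt_pos.2 hD
  have hss : Real.sqrt (DH eps t) * Real.sqrt (DH eps t) = DH eps t :=
    Real.mul_self_sqrt hD.le
  have hsq : HasDerivAt (fun s => Real.sqrt (DH eps s))
      (alphaH eps * (1 - 2 * t) / (2 * Real.sqrt (DH eps t))) t := by
    have := (Real.hasDerivAt_sqrt hD.ne').comp t (hasDerivAt_DH eps t)
    refine this.congr_deriv (Eq.symm ?_); ring
  have h := (hsq.smul_const (x - x0)).add (hasDerivAt_xMean n x0 x1 t)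
  simp only [xhat]
  refine h.congr_deriv (Eq.symm ?_)
  simp only [vcu, xhat, (hasDerivAt_DH eps t).deriv, add_sub_cancel_right, smul_smul]
  congr 2
  field_simp
  linear_combination (alphaH eps - 2 * alphaH eps * t) * hss

/-! ### The pushforward identity -/

lemma push_muH (n : ℕ) (eps : ℝ) (heps : 0 < eps) (x0 x1 : EuclideanSpace ℝ (Fin n))
    {t : ℝ} (ht : t ∈ Set.Icc (0:ℝ) 1) :
    (volume : Measure (EuclideanSpace ℝ (Fin n))).withDensity
        (fun x => ENNReal.ofReal (muH n eps x0 x1 t x)) =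
      Measure.map (xhat n eps x0 x1 t)
        ((volume : Measure (EuclideanSpace ℝ (Fin n))).withDensity
          (fun x => ENNReal.ofReal (muH n eps x0 x1 0 x))) := by
  have hD := DH_pos heps ht
  set c := Real.sqrt (DH eps t) with hc_def
  have hc : 0 < c := Real.sqrt_pos.2 hD
  have hss : c * c = DH eps t := Real.mul_self_sqrt hD.le
  set m := xMean n x0 x1 t with hm_def
  -- the affine measurable equivalence
  let e : EuclideanSpace ℝ (Fin n) ≃ₜ EuclideanSpace ℝ (Fin n) :=
    (Homeomorph.addRight (-x0)).trans ((Homeomorph.smulOfNeZero c hc.ne').trans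
      (Homeomorph.addRight m))
  let E : EuclideanSpace ℝ (Fin n) ≃ᵐ EuclideanSpace ℝ (Fin n) := e.toMeasurableEquiv
  have happ : ∀ z, E z = c • (z - x0) + m := by
    intro z
    show c • (z + -x0) + m = c • (z - x0) + m
    rw [sub_eq_add_neg]
  have hxhat : xhat n eps x0 x1 t = ⇑E := by
    funext z; rw [happ z]; rfl
  have hsymm : ∀ y, E.symm y = c⁻¹ • (y - m) + x0 := by
    intro y
    apply E.injective
    rw [E.apply_symm_apply, happ, add_sub_cancel_right, smul_inv_smul₀ hc.ne',
      sub_add_cancel]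
  have hmeas0 : Measurable (fun x => ENNReal.ofReal (muH n eps x0 x1 0 x)) :=
    (ENNReal.continuous_ofReal.comp (continuous_muH n eps x0 x1 0)).measurable
  rw [hxhat, map_withDensity_equiv E volume hmeas0]
  have hmapvol : Measure.map (⇑E) (volume : Measure (EuclideanSpace ℝ (Fin n)))
      = ENNReal.ofReal ((c ^ n)⁻¹) • volume := by
    have h1 : Measure.map (⇑E) (volume : Measure (EuclideanSpace ℝ (Fin n))) =
        Measure.map (· + m) (Measure.map (c • ·)
          (Measure.map (· + (-x0)) volume)) := by
      rw [Measure.map_map (measurable_const_smul c) (measurable_add_const (-x0)),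
        Measure.map_map (measurable_add_const m)
          ((measurable_const_smul c).comp (measurable_add_const (-x0)))]
      rfl
    rw [h1, map_add_right_eq_self volume (-x0), Measure.map_addHaar_smul volume hc.ne',
      Measure.map_smul, map_add_right_eq_self]
    congr 1
    rw [finrank_euclideanSpace_fin, abs_of_nonneg (by positivity)]
  have hms : Measurable (fun y => ENNReal.ofReal (muH n eps x0 x1 0 (E.symm y))) :=
    hmeas0.comp E.symm.measurable
  rw [hmapvol, withDensity_smul_measure, ← withDensity_smul _ hms]
  congr 1
  funext y
  simp only [Pi.smul_apply, smul_eq_mul, hsymm y]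
  rw [← ENNReal.ofReal_mul (by positivity)]
  congr 1
  -- now a real-number identity
  rw [muH, muH, xMean_zero, DH_zero, add_sub_cancel_right]
  have hnorm : ‖c⁻¹ • (y - m)‖ ^ 2 = (c⁻¹) ^ 2 * ‖y - m‖ ^ 2 := by
    rw [norm_smul, Real.norm_eq_abs, abs_of_nonneg (by positivity), mul_pow]
  have hcoeff : (2 * π * DH eps t) ^ (-(n : ℝ) / 2)
      = (c ^ n)⁻¹ * (2 * π * 1) ^ (-(n : ℝ) / 2) := by
    rw [mul_one, ← hss]
    rw [Real.mul_rpow (by positivity) (by positivity)]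
    have h2 : (c * c) ^ (-(n : ℝ) / 2) = (c ^ n)⁻¹ := by
      rw [← Real.rpow_natCast c n, ← Real.rpow_neg hc.le,
        show c * c = c ^ (2:ℝ) by rw [Real.rpow_two]; ring, ← Real.rpow_mul hc.le]
      congr 1; ring
    rw [h2]; ring
  rw [hcoeff, hnorm]
  have hexp : -‖y - m‖ ^ 2 / (2 * DH eps t) = -(c⁻¹ ^ 2 * ‖y - m‖ ^ 2) / (2 * 1) := by
    rw [← hss, inv_pow, pow_two, div_eq_div_iff (by positivity) (by norm_num)]
    field_simp
  rw [hexp]; ring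

/-! ### The continuity equation -/

lemma pde_muH (n : ℕ) (eps : ℝ) (heps : 0 < eps) (x0 x1 : EuclideanSpace ℝ (Fin n))
    {t : ℝ} (ht : t ∈ Set.Ioo (0:ℝ) 1) (x : EuclideanSpace ℝ (Fin n)) :
    deriv (fun s => muH n eps x0 x1 s x) t +
      ∑ i : Fin n, deriv (fun s : ℝ =>
        muH n eps x0 x1 t (x + s • EuclideanSpace.single i (1 : ℝ)) *
          (vcu n eps x0 x1 t (x + s • EuclideanSpace.single i (1 : ℝ))) i) 0 = 0 := by
  have hD : 0 < DH eps t := DH_pos heps ⟨ht.1.le, ht.2.le⟩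
  have hpi : (0:ℝ) < 2 * π * DH eps t := by positivity
  set m := xMean n x0 x1 t with hm
  set R : ℝ := ‖x - m‖ ^ 2 with hR_def
  set I : ℝ := inner ℝ (x - m) (x1 - x0) with hI_def
  set B : ℝ := ‖x1 - x0‖ ^ 2 with hB_def
  set D' : ℝ := alphaH eps * (1 - 2 * t) with hD'_def
  set C : ℝ := (2 * π * DH eps t) ^ (-(n : ℝ) / 2) with hC_def
  set E0 : ℝ := Real.exp (-R / (2 * DH eps t)) with hE0_def
  set K : ℝ := D' / (2 * DH eps t) with hK_def
  -- norm expansion in time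
  have hGs : ∀ s : ℝ, ‖x - xMean n x0 x1 s‖ ^ 2 = R + 2 * (t - s) * I + (t - s) ^ 2 * B := by
    intro s
    have hxy : x - xMean n x0 x1 s = (x - m) + (t - s) • (x1 - x0) := by
      rw [hm]; unfold xMean; module
    rw [hxy, norm_add_sq_real, real_inner_smul_right, norm_smul, Real.norm_eq_abs,
      mul_pow, sq_abs, hR_def, hI_def, hB_def]
    ring
  -- time derivative
  have hftime : (fun s => muH n eps x0 x1 s x) = (fun s =>
      (2 * π * DH eps s) ^ (-(n : ℝ) / 2) *
        Real.exp (-(R + 2 * (t - s) * I + (t - s) ^ 2 * B) / (2 * DH eps s))) := by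
    funext s; simp only [muH]; rw [hGs s]
  have hP : HasDerivAt (fun s => (2 * π * DH eps s) ^ (-(n : ℝ) / 2))
      ((2 * π * D') * (-(n : ℝ) / 2) * (2 * π * DH eps t) ^ (-(n : ℝ) / 2 - 1)) t := by
    have := ((hasDerivAt_DH eps t).const_mul (2 * π)).rpow_const
      (p := -(n : ℝ) / 2) (Or.inl hpi.ne')
    convert this using 2 <;> ring
  have h1 : HasDerivAt (fun s : ℝ => t - s) (-1) t := (hasDerivAt_id t).const_sub t
  have hG : HasDerivAt (fun s : ℝ => R + 2 * (t - s) * I + (t - s) ^ 2 * B)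
      (2 * -1 * I + 2 * (t - t) ^ 1 * -1 * B) t := by
    exact (((h1.const_mul 2).mul_const I).const_add R).add ((h1.pow 2).mul_const B)
  have hden : HasDerivAt (fun s : ℝ => 2 * DH eps s) (2 * D') t :=
    (hasDerivAt_DH eps t).const_mul 2
  have hfrac := (hG.neg.div hden (by positivity))
  have hmu := hP.mul hfrac.exp
  rw [hftime]
  rw [HasDerivAt.deriv (f := fun s => (2 * π * DH eps s) ^ (-(n : ℝ) / 2) * Real.exp (-(R + 2 * (t - s) * I + (t - s) ^ 2 * B) / (2 * DH eps s))) hmu]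
  simp only [Pi.neg_apply, Pi.div_apply]
  -- spatial derivatives
  have hvcomp : ∀ (i : Fin n) (y : EuclideanSpace ℝ (Fin n)),
      vcu n eps x0 x1 t y i = K * ((y - m) i) + (x1 i - x0 i) := by
    intro i y
    simp only [vcu, ← hm, PiLp.add_apply, PiLp.smul_apply, PiLp.sub_apply, smul_eq_mul,
      (hasDerivAt_DH eps t).deriv, hK_def, hD'_def]
  have hcomp : ∀ (i : Fin n) (s : ℝ),
      ((x + s • EuclideanSpace.single i (1:ℝ)) - m) i = (x - m) i + s := by
    intro i s
    simp [PiLp.sub_apply, PiLp.add_apply, PiLp.smul_apply, EuclideanSpace.single_apply]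
    ring
  have hni : ∀ (i : Fin n) (s : ℝ),
      ‖x + s • EuclideanSpace.single i (1:ℝ) - m‖ ^ 2 = R + 2 * s * ((x - m) i) + s ^ 2 := by
    intro i s
    have hxy : x + s • EuclideanSpace.single i (1:ℝ) - m
        = (x - m) + s • EuclideanSpace.single i (1:ℝ) := add_sub_right_comm x _ m
    rw [hxy, norm_add_sq_real, real_inner_smul_right, norm_smul, Real.norm_eq_abs,
      mul_pow, sq_abs, EuclideanSpace.inner_single_right, EuclideanSpace.norm_single]
    simp [hR_def]
    ring
  have hsum : ∀ i : Fin n, deriv (fun s : ℝ =>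
      muH n eps x0 x1 t (x + s • EuclideanSpace.single i (1 : ℝ)) *
        (vcu n eps x0 x1 t (x + s • EuclideanSpace.single i (1 : ℝ))) i) 0
      = C * E0 * (K - ((x - m) i) * (K * ((x - m) i) + (x1 i - x0 i)) / DH eps t) := by
    intro i
    have hfun : (fun s : ℝ =>
        muH n eps x0 x1 t (x + s • EuclideanSpace.single i (1 : ℝ)) *
          (vcu n eps x0 x1 t (x + s • EuclideanSpace.single i (1 : ℝ))) i)
        = (fun s : ℝ => C * Real.exp (-(R + 2 * s * ((x - m) i) + s ^ 2) / (2 * DH eps t)) *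
            (K * ((x - m) i + s) + (x1 i - x0 i))) := by
      funext s
      simp only [muH, ← hm, ← hC_def]
      rw [hni i s, hvcomp i _, hcomp i s]
    rw [hfun]
    have hnum : HasDerivAt (fun s : ℝ => R + 2 * s * ((x - m) i) + s ^ 2)
        (2 * 1 * ((x - m) i) + (2:ℕ) * (0:ℝ) ^ 1) 0 := by
      exact ((((hasDerivAt_id 0).const_mul 2).mul_const _).const_add R).add (hasDerivAt_pow 2 0)
    have hfrac_i := (hnum.neg).div_const (2 * DH eps t)
    have hw : HasDerivAt (fun s : ℝ => K * (((x - m) i) + s) + (x1 i - x0 i)) (K * 1) 0 :=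
      (((hasDerivAt_id 0).const_add _).const_mul K).add_const _
    have hφ := ((hfrac_i.exp).const_mul C).mul hw
    rw [HasDerivAt.deriv (f := fun s : ℝ => C * Real.exp (-(R + 2 * s * ((x - m) i) + s ^ 2) / (2 * DH eps t)) * (K * ((x - m) i + s) + (x1 i - x0 i))) hφ]
    simp only [Pi.neg_apply]
    have hE : Real.exp (-(R + 2 * 0 * ((x - m) i) + (0:ℝ) ^ 2) / (2 * DH eps t)) = E0 := by
      norm_num [hE0_def]
    rw [hE]
    field_simp
    ring
  rw [Finset.sum_congr rfl (fun i _ => hsum i)]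
  -- sum identities
  have hRsum : ∑ i : Fin n, ((x - m) i) ^ 2 = R := by
    rw [hR_def, EuclideanSpace.norm_eq, Real.sq_sqrt (by positivity)]
    refine Finset.sum_congr rfl fun i _ => ?_
    rw [Real.norm_eq_abs, sq_abs]
  have hIsum : ∑ i : Fin n, ((x - m) i) * (x1 i - x0 i) = I := by
    rw [hI_def, PiLp.inner_apply]
    refine Finset.sum_congr rfl fun i _ => ?_
    simp [RCLike.inner_apply, PiLp.sub_apply]; ring
  have hsum2 : ∑ i : Fin n, C * E0 * (K - ((x - m) i) * (K * ((x - m) i) + (x1 i - x0 i)) / DH eps t)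
      = (n : ℝ) * (C * E0 * K) - (C * E0 / DH eps t) * (K * R + I) := by
    have : ∀ i : Fin n, C * E0 * (K - ((x - m) i) * (K * ((x - m) i) + (x1 i - x0 i)) / DH eps t)
        = C * E0 * K - (C * E0 / DH eps t) * (K * ((x - m) i) ^ 2 + ((x - m) i) * (x1 i - x0 i)) := by
      intro i; field_simp
    rw [Finset.sum_congr rfl (fun i _ => this i), Finset.sum_sub_distrib,
      Finset.sum_const, Finset.card_univ, Fintype.card_fin, ← Finset.mul_sum,
      Finset.sum_add_distrib, ← Finset.mul_sum, hRsum, hIsum, nsmul_eq_mul]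
  rw [hsum2]
  -- final algebraic identity
  have e1 : (2 * π * DH eps t) ^ (-(n : ℝ) / 2 - 1) = C / (2 * π * DH eps t) := by
    rw [Real.rpow_sub hpi, Real.rpow_one, hC_def]
  rw [e1]
  have e2 : -(R + 2 * (t - t) * I + (t - t) ^ 2 * B) = -R := by ring
  rw [e2]
  rw [hK_def]
  rw [← hE0_def, ← hC_def]
  field_simp
  ring

/-- **Continuity equation for the Gaussian entropic interpolation of the heat semigroup**
(Section 6, identities `eq:pde`, `eq:edo`): the flow `μ^ε_t = N(x_t, D^ε_t·Id)` satisfies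
`∂_t μ^ε_t + ∇·(μ^ε_t v^{cu,ε}_t) = 0` pointwise on `(0,1)×ℝⁿ`; moreover
`μ^ε_t = (x̂^ε_t)_# μ^ε_0` and `t ↦ x̂^ε_t(x)` solves the ODE `ẋ = v^{cu,ε}(x)`. -/
theorem heat_gaussian_interpolation_continuity_equation (n : ℕ) (hn : 0 < n)
    (eps : ℝ) (heps : 0 < eps) (x0 x1 : EuclideanSpace ℝ (Fin n)) :
    (∀ t ∈ Set.Ioo (0 : ℝ) 1, ∀ x : EuclideanSpace ℝ (Fin n),
      deriv (fun s => muH n eps x0 x1 s x) t +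
        ∑ i : Fin n, deriv (fun s : ℝ =>
          muH n eps x0 x1 t (x + s • EuclideanSpace.single i (1 : ℝ)) *
            (vcu n eps x0 x1 t (x + s • EuclideanSpace.single i (1 : ℝ))) i) 0 = 0) ∧
    (∀ t ∈ Set.Icc (0 : ℝ) 1,
      (volume : Measure (EuclideanSpace ℝ (Fin n))).withDensity
          (fun x => ENNReal.ofReal (muH n eps x0 x1 t x)) =
        Measure.map (xhat n eps x0 x1 t)
          ((volume : Measure (EuclideanSpace ℝ (Fin n))).withDensity
            (fun x => ENNReal.ofReal (muH n eps x0 x1 0 x)))) ∧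
    (∀ x : EuclideanSpace ℝ (Fin n), ∀ t ∈ Set.Icc (0 : ℝ) 1,
      HasDerivAt (fun s => xhat n eps x0 x1 s x)
        (vcu n eps x0 x1 t (xhat n eps x0 x1 t x)) t) := by
  refine ⟨fun t ht x => pde_muH n eps heps x0 x1 ht x,
    fun t ht => push_muH n eps heps x0 x1 ht,
    fun x t ht => xhat_ode n eps heps x0 x1 x ht⟩
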